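/- (Yankov–von Neumann selection) Let f : (X,E) → (Y,F) be a surjective measurable map, where (X,E) and (Y,F) are separable type A spaces. Then there exists a map g : Y → X with f(g(y)) = y for all y ∈ Y which is universally measurable: for every E' ∈ E and every probability measure ν on (Y,F) there exist F⁻, F⁺ ∈ F with F⁻ ⊆ g⁻¹(E') ⊆ F⁺ and ν(F⁺ \ F⁻) = 0. -/

import Mathlib

/-!
Through the exact embeddings `ψ : X → M` and `θ : Y → M`, the map `θ ∘ f` factors as `h ∘ ψ`
with `h` Borel, so the graph `{(h q, q) | q ∈ range ψ}` of `f` is analytic: it is the range of a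
continuous `τ : ℕ^ℕ → M × M`. Over each `θ y` the fibre of `Prod.fst ∘ τ` is a nonempty closed
subset of `ℕ^ℕ`, and we select its lexicographically least point. Each coordinate of that point
is decided by which of countably many analytic sets (projections of images of cylinders) contain
`θ y`. Analytic sets are null measurable for every finite measure: choosing bounds on the
coordinates one at a time, so as to lose little outer measure at each step, yields a compact
subset of nearly full measure. Hence the selector is universally measurable, and the
injectivity of `θ` turns the selected point of the graph into a preimage under `f`.
-/

open MeasureTheory

/-- A map `f : (X,E) → (Y,F)` between measurable spaces is *exactly measurable* if
`f⁻¹(F) = E`. -/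
def ExactlyMeasurable {X Y : Type*} [mX : MeasurableSpace X] [mY : MeasurableSpace Y]
    (f : X → Y) : Prop :=
  MeasurableSpace.comap f mY = mX

/-- A countably generated measurable space `(X,E)` is a *type A space* if there is an
exactly measurable map `f : (X,E) → (M,B)` into the Cantor space whose range is an
analytic subset of `M`. -/
def IsTypeA (X : Type*) [MeasurableSpace X] : Prop :=
  MeasurableSpace.CountablyGenerated X ∧
    ∃ f : X → (ℕ → Bool), ExactlyMeasurable f ∧ MeasureTheory.AnalyticSet (Set.range f)

open Set Filter Topology
open scoped ENNReal

lemma MeasureTheory.exists_measure_iUnion_le_add {α : Type*} [MeasurableSpace α]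
    (μ : Measure α) {s : ℕ → Set α} (hs : Monotone s) (hfin : μ (⋃ n, s n) ≠ ∞) {δ : ℝ≥0∞}
    (hδ : δ ≠ 0) : ∃ k, μ (⋃ n, s n) ≤ μ (s k) + δ := by
  have hlim := (tendsto_measure_iUnion_atTop (μ := μ) hs).add_const δ
  obtain ⟨k, hk⟩ := (hlim.eventually (lt_mem_nhds (ENNReal.lt_add_right hfin hδ))).exists
  exact ⟨k, hk.le⟩

lemma MeasureTheory.NullMeasurableSet.of_forall_exists_subset_le_add {α : Type*}
    [MeasurableSpace α] {μ : Measure α} [IsFiniteMeasure μ] {A : Set α}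
    (h : ∀ ε ≠ 0, ∃ K ⊆ A, MeasurableSet K ∧ μ A ≤ μ K + ε) : NullMeasurableSet A μ := by
  choose K hKA hK hAK using fun n : ℕ => h ((n : ℝ≥0∞) + 1)⁻¹ (by simp)
  have hM : MeasurableSet (⋃ n, K n) := .iUnion hK
  have hle : μ A ≤ μ (⋃ n, K n) := by
    refine ENNReal.le_of_forall_pos_le_add fun δ hδ _ => ?_
    obtain ⟨n, hn⟩ := ENNReal.exists_inv_nat_lt (show (δ : ℝ≥0∞) ≠ 0 by simpa using hδ.ne')
    calc μ A ≤ μ (K n) + ((n : ℝ≥0∞) + 1)⁻¹ := hAK n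
      _ ≤ μ (⋃ m, K m) + δ :=
        add_le_add (measure_mono (subset_iUnion K n))
          ((ENNReal.inv_le_inv.2 le_self_add).trans hn.le)
  have hnull : μ (A \ ⋃ n, K n) = 0 := by
    rw [measure_sdiff (iUnion_subset hKA) hM.nullMeasurableSet (measure_ne_top _ _),
      tsub_eq_zero_of_le hle]
  rw [← union_sdiff_cancel (iUnion_subset hKA)]
  exact hM.nullMeasurableSet.union (NullMeasurableSet.of_null hnull)

lemma MeasureTheory.NullMeasurableSet.exists_measurableSet_subset_superset {α : Type*}
    [MeasurableSpace α] {μ : Measure α} {s : Set α} (hs : NullMeasurableSet s μ) :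
    ∃ t u, MeasurableSet t ∧ MeasurableSet u ∧ t ⊆ s ∧ s ⊆ u ∧ μ (u \ t) = 0 := by
  obtain ⟨t, hts, ht, hte⟩ := hs.exists_measurable_subset_ae_eq
  exact ⟨t, toMeasurable μ s, ht, measurableSet_toMeasurable _ _, hts, subset_toMeasurable _ _,
    (ae_eq_set.1 (hs.toMeasurable_ae_eq.trans hte.symm)).1⟩

lemma isCompact_setOf_forall_le (b : ℕ → ℕ) : IsCompact {x : ℕ → ℕ | ∀ i, x i ≤ b i} := by
  simpa [Set.pi] using isCompact_univ_pi fun i => (finite_Iic (b i)).isCompact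

def greedyBox (k : Set (ℕ → ℕ) → ℕ → ℕ) : ℕ → Set (ℕ → ℕ)
  | 0 => univ
  | n + 1 => greedyBox k n ∩ {x | x n ≤ k (greedyBox k n) n}

lemma greedyBox_eq (k : Set (ℕ → ℕ) → ℕ → ℕ) (n : ℕ) :
    greedyBox k n = {x | ∀ i < n, x i ≤ k (greedyBox k i) i} := by
  induction n with
  | zero => simp [greedyBox]
  | succ n ih =>
    ext x
    simp only [greedyBox, ih, mem_inter_iff, mem_ofPred_eq, Nat.forall_lt_succ_right]

lemma exists_measure_image_le_image_inter_add {α : Type*} [MeasurableSpace α] (μ : Measure α)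
    [IsFiniteMeasure μ] (σ : (ℕ → ℕ) → α) (S : Set (ℕ → ℕ)) (n : ℕ) {δ : ℝ≥0∞} (hδ : δ ≠ 0) :
    ∃ k, μ (σ '' S) ≤ μ (σ '' (S ∩ {x | x n ≤ k})) + δ := by
  have hS : σ '' S = ⋃ k, σ '' (S ∩ {x | x n ≤ k}) := by
    rw [← image_iUnion, ← inter_iUnion,
      iUnion_eq_univ_iff.2 fun x => ⟨x n, mem_ofPred_eq ▸ le_rfl⟩, inter_univ]
  rw [hS]
  exact exists_measure_iUnion_le_add μ (s := fun k => σ '' (S ∩ {x | x n ≤ k}))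
    (fun k l hkl => image_mono (inter_subset_inter_right _ fun x hx => le_trans hx hkl))
    (measure_ne_top _ _) hδ

section InnerApproximation

variable {α : Type*} [TopologicalSpace α] [T2Space α] [FirstCountableTopology α]
  {σ : (ℕ → ℕ) → α}

lemma iInter_closure_image_subset_image (hσ : Continuous σ) (b : ℕ → ℕ) :
    ⋂ n, closure (σ '' {x | ∀ i < n, x i ≤ b i}) ⊆ σ '' {x | ∀ i, x i ≤ b i} := by
  intro y hy
  obtain ⟨V, hV⟩ := (𝓝 y).exists_antitone_basis
  have hpick : ∀ n, ∃ a : ℕ → ℕ, (∀ i < n, a i ≤ b i) ∧ σ a ∈ V n := fun n => by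
    obtain ⟨_, hyV, a, ha, rfl⟩ :=
      mem_closure_iff_nhds.mp (mem_iInter.mp hy n) (V n) (hV.1.mem_of_mem trivial)
    exact ⟨a, ha, hyV⟩
  choose a hab haV using hpick
  -- clamp `a n` into the compact box and extract a convergent subsequence there
  obtain ⟨c, hc, φ, hφ, hlim⟩ := (isCompact_setOf_forall_le b).tendsto_subseq
    (x := fun n i => min (a n i) (b i)) fun n i => min_le_right _ _
  have ha : Tendsto (a ∘ φ) atTop (𝓝 c) := by
    rw [tendsto_pi_nhds] at hlim ⊢
    intro i
    refine (hlim i).congr' ?_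
    filter_upwards [eventually_gt_atTop i] with n hn
    exact min_eq_left (hab _ i (hn.trans_le (hφ.id_le n)))
  exact ⟨c, hc, tendsto_nhds_unique ((hσ.tendsto c).comp ha)
    ((hV.tendsto haV).comp hφ.tendsto_atTop)⟩

variable [MeasurableSpace α] [OpensMeasurableSpace α] (μ : Measure α) [IsFiniteMeasure μ]

lemma exists_isCompact_subset_range_le_add (hσ : Continuous σ) {ε : ℝ≥0∞} (hε : ε ≠ 0) :
    ∃ K ⊆ range σ, IsCompact K ∧ μ (range σ) ≤ μ K + ε := by
  obtain ⟨δ, hδ, hδε⟩ := ENNReal.exists_pos_sum_of_countable hε ℕ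
  choose k hk using fun (S : Set (ℕ → ℕ)) n =>
    exists_measure_image_le_image_inter_add μ σ S n (ENNReal.coe_ne_zero.2 (hδ n).ne')
  have hinv : ∀ n,
      μ (range σ) ≤ μ (σ '' greedyBox k n) + ∑ i ∈ Finset.range n, (δ i : ℝ≥0∞) := by
    intro n
    induction n with
    | zero => simp [greedyBox]
    | succ n ih =>
      calc μ (range σ) ≤ μ (σ '' greedyBox k n) + ∑ i ∈ Finset.range n, (δ i : ℝ≥0∞) := ih
        _ ≤ μ (σ '' greedyBox k (n + 1)) + δ n + ∑ i ∈ Finset.range n, (δ i : ℝ≥0∞) := by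
          gcongr; exact hk _ n
        _ = _ := by rw [Finset.sum_range_succ]; ring
  set b : ℕ → ℕ := fun i => k (greedyBox k i) i
  have hbox : ∀ n, greedyBox k n = {x | ∀ i < n, x i ≤ b i} := greedyBox_eq k
  set C := fun n => closure (σ '' greedyBox k n)
  have hC : ∀ n, μ (range σ) ≤ μ (C n) + ε := fun n =>
    (hinv n).trans (add_le_add (measure_mono subset_closure)
      ((ENNReal.sum_le_tsum _).trans hδε.le))
  have hCanti : Antitone C := fun m n hmn => closure_mono (image_mono (by
    rw [hbox, hbox]
    exact fun x hx i hi => hx i (hi.trans_le hmn)))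
  refine ⟨σ '' {x | ∀ i, x i ≤ b i}, image_subset_range _ _,
    (isCompact_setOf_forall_le b).image hσ, ?_⟩
  calc μ (range σ) ≤ (⨅ n, μ (C n)) + ε := ENNReal.iInf_add ▸ le_iInf hC
    _ = μ (⋂ n, C n) + ε := by
      rw [hCanti.measure_iInter (fun n => isClosed_closure.measurableSet.nullMeasurableSet)
        ⟨0, measure_ne_top _ _⟩]
    _ ≤ μ (σ '' {x | ∀ i, x i ≤ b i}) + ε := by
      gcongr
      simp only [C, hbox]
      exact iInter_closure_image_subset_image hσ b

theorem MeasureTheory.AnalyticSet.nullMeasurableSet {A : Set α} (hA : AnalyticSet A) :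
    NullMeasurableSet A μ := by
  rw [AnalyticSet_def] at hA
  rcases hA with rfl | ⟨σ, hσ, rfl⟩
  · exact nullMeasurableSet_empty
  · refine .of_forall_exists_subset_le_add fun ε hε => ?_
    obtain ⟨K, hKA, hK, hle⟩ := exists_isCompact_subset_range_le_add μ hσ hε
    exact ⟨K, hKA, hK.isClosed.measurableSet, hle⟩

end InnerApproximation

def lexMinStage (F : Set (ℕ → ℕ)) : ℕ → Set (ℕ → ℕ)
  | 0 => F
  | n + 1 => lexMinStage F n ∩ {x | x n = sInf ((· n) '' lexMinStage F n)}

/-- The lexicographically least element of a nonempty closed `F ⊆ ℕ^ℕ`. -/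
noncomputable def lexMin (F : Set (ℕ → ℕ)) (n : ℕ) : ℕ := sInf ((· n) '' lexMinStage F n)

section LexMin

variable {F : Set (ℕ → ℕ)}

lemma lexMinStage_eq (F : Set (ℕ → ℕ)) (n : ℕ) :
    lexMinStage F n = {x ∈ F | ∀ i < n, x i = lexMin F i} := by
  induction n with
  | zero => simp [lexMinStage]
  | succ n ih =>
    change lexMinStage F n ∩ {x | x n = lexMin F n} = _
    ext x
    simp only [ih, mem_inter_iff, mem_ofPred_eq, Nat.forall_lt_succ_right, and_assoc]

lemma lexMinStage_nonempty (hF : F.Nonempty) : ∀ n, (lexMinStage F n).Nonempty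
  | 0 => hF
  | n + 1 => by
    obtain ⟨x, hx, hxn⟩ := Nat.sInf_mem ((lexMinStage_nonempty hF n).image (· n))
    exact ⟨x, hx, hxn⟩

lemma lexMin_mem (hF : IsClosed F) (hne : F.Nonempty) : lexMin F ∈ F := by
  choose a ha using lexMinStage_nonempty hne
  simp only [lexMinStage_eq, mem_sep_iff] at ha
  refine hF.mem_of_tendsto (f := a) (b := atTop) (tendsto_pi_nhds.2 fun i => ?_)
    (.of_forall fun n => (ha n).1)
  refine tendsto_const_nhds.congr' ?_
  filter_upwards [eventually_gt_atTop i] with n hn using ((ha n).2 i hn).symm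

lemma lexMin_eq_iff (hne : F.Nonempty) {n k : ℕ} :
    lexMin F n = k ↔ k ∈ (· n) '' lexMinStage F n ∧ ∀ j < k, j ∉ (· n) '' lexMinStage F n := by
  constructor
  · rintro rfl
    have hleast := isLeast_csInf ((lexMinStage_nonempty hne n).image (· n))
    exact ⟨hleast.1, fun j hj hjT => (hleast.2 hjT).not_gt hj⟩
  · rintro ⟨hk, hmin⟩
    exact IsLeast.csInf_eq ⟨hk, fun j hj => not_lt.1 fun hjk => hmin j hjk hj⟩

theorem measurable_lexMin {Y : Type*} [MeasurableSpace Y] {F : Y → Set (ℕ → ℕ)}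
    (hne : ∀ y, (F y).Nonempty)
    (hF : ∀ C : Set (ℕ → ℕ), IsClosed C → MeasurableSet {y | (F y ∩ C).Nonempty}) :
    Measurable fun y => lexMin (F y) := by
  refine measurable_pi_iff.mpr fun n => ?_
  induction n using Nat.strong_induction_on with
  | _ n ih =>
  set pre : Y → Fin n → ℕ := fun y i => lexMin (F y) i
  have hpre : Measurable pre := measurable_pi_iff.mpr fun i => ih i i.2
  set cyl : (Fin n → ℕ) → ℕ → Set (ℕ → ℕ) := fun p j =>
    {x | (∀ i : Fin n, x i = p i) ∧ x n = j}
  have hcyl : ∀ p j, IsClosed (cyl p j) := fun p j => by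
    simp only [cyl, ofPred_and, ofPred_forall]
    exact (isClosed_iInter fun i => isClosed_eq (continuous_apply _) continuous_const).inter
      (isClosed_eq (continuous_apply _) continuous_const)
  have hmem : ∀ y j, j ∈ (· n) '' lexMinStage (F y) n ↔ (F y ∩ cyl (pre y) j).Nonempty := by
    intro y j
    simp only [lexMinStage_eq, cyl, pre, Fin.forall_iff]
    constructor
    · rintro ⟨x, ⟨hxF, hx⟩, rfl⟩
      exact ⟨x, hxF, hx, rfl⟩
    · rintro ⟨x, hxF, hx, rfl⟩
      exact ⟨x, ⟨hxF, hx⟩, rfl⟩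
  have hset : ∀ k, (fun y => lexMin (F y) n) ⁻¹' {k} = ⋃ p, pre ⁻¹' {p} ∩
      ({y | (F y ∩ cyl p k).Nonempty} \ ⋃ j < k, {y | (F y ∩ cyl p j).Nonempty}) := by
    intro k
    ext y
    simp only [mem_preimage, mem_singleton_iff, lexMin_eq_iff (hne y), hmem, mem_iUnion,
      mem_inter_iff, Set.mem_sdiff, mem_ofPred_eq, exists_prop, not_exists, not_and]
    constructor
    · rintro ⟨hk, hmin⟩
      exact ⟨pre y, rfl, hk, hmin⟩
    · rintro ⟨p, rfl, hk, hmin⟩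
      exact ⟨hk, hmin⟩
  refine measurable_to_countable' fun k => ?_
  rw [hset]
  exact .iUnion fun p => (hpre (measurableSet_singleton p)).inter ((hF _ (hcyl p k)).diff
    (.biUnion (to_countable _) fun j _ => hF _ (hcyl p j)))

end LexMin

theorem MeasureTheory.AnalyticSet.image_of_measurable {α β : Type*} [TopologicalSpace α]
    [MeasurableSpace α] [BorelSpace α] [TopologicalSpace β] [MeasurableSpace β]
    [OpensMeasurableSpace β] [SecondCountableTopology β] {s : Set α} (hs : AnalyticSet s)
    {f : α → β} (hf : Measurable f) : AnalyticSet (f '' s) := by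
  rw [AnalyticSet_def] at hs
  rcases hs with rfl | ⟨σ, hσ, rfl⟩
  · simpa using analyticSet_empty
  · rw [← range_comp, ← image_univ]
    exact MeasurableSet.univ.analyticSet_image (hf.comp hσ.measurable)

theorem MeasureTheory.AnalyticSet.exists_nullMeasurable_section {β γ Y : Type*}
    [TopologicalSpace β] [T2Space β] [FirstCountableTopology β] [MeasurableSpace β]
    [OpensMeasurableSpace β] [TopologicalSpace γ] [MeasurableSpace γ] [BorelSpace γ]
    [MeasurableSpace Y] {G : Set (β × γ)} (hG : AnalyticSet G) {θ : Y → β} (hθ : Measurable θ)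
    (hθG : ∀ y, θ y ∈ Prod.fst '' G) :
    ∃ s : Y → γ, (∀ y, (θ y, s y) ∈ G) ∧
      ∀ ν : Measure Y, IsFiniteMeasure ν → NullMeasurable s ν := by
  rw [AnalyticSet_def] at hG
  rcases hG with rfl | ⟨τ, hτ, rfl⟩
  · have : IsEmpty Y := ⟨fun y => by simpa using hθG y⟩
    exact ⟨isEmptyElim, isEmptyElim, fun ν _ t _ => by simp [eq_empty_of_isEmpty]⟩
  set F : Y → Set (ℕ → ℕ) := fun y => (Prod.fst ∘ τ) ⁻¹' {θ y}
  have hFne : ∀ y, (F y).Nonempty := fun y => by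
    obtain ⟨_, ⟨a, rfl⟩, ha⟩ := hθG y
    exact ⟨a, ha⟩
  refine ⟨fun y => (τ (lexMin (F y))).2, fun y => ?_, fun ν _ => ?_⟩
  · have hfst : (τ (lexMin (F y))).1 = θ y :=
      lexMin_mem (isClosed_singleton.preimage (continuous_fst.comp hτ)) (hFne y)
    exact ⟨lexMin (F y), by rw [← hfst]⟩
  · have hF : ∀ C, IsClosed C → NullMeasurableSet {y | (F y ∩ C).Nonempty} ν := by
      intro C hC
      have : {y | (F y ∩ C).Nonempty} = θ ⁻¹' ((Prod.fst ∘ τ) '' C) := by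
        ext y
        simp [F, Set.Nonempty, and_comm, eq_comm]
      rw [this]
      exact ((hC.analyticSet.image_of_continuous (continuous_fst.comp hτ)).nullMeasurableSet
        (ν.map θ)).preimage (hθ.quasiMeasurePreserving ν)
    exact (continuous_snd.comp hτ).measurable.comp_nullMeasurable
      (measurable_lexMin (Y := NullMeasurableSpace Y ν) hFne hF)

namespace ExactlyMeasurable

variable {X Y : Type*} [MeasurableSpace X] [MeasurableSpace Y] {f : X → Y}

lemma measurable (hf : ExactlyMeasurable f) : Measurable f :=
  Measurable.of_comap_le hf.le

lemma exists_measurableSet_preimage_eq (hf : ExactlyMeasurable f) {E : Set X}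
    (hE : MeasurableSet E) : ∃ S, MeasurableSet S ∧ f ⁻¹' S = E := by
  rw [← hf] at hE
  exact hE

lemma injective [MeasurableSingletonClass X] (hf : ExactlyMeasurable f) :
    Function.Injective f := fun a b hab => by
  obtain ⟨S, -, hS⟩ := hf.exists_measurableSet_preimage_eq (measurableSet_singleton b)
  have ha : a ∈ f ⁻¹' S := by rw [mem_preimage, hab, ← mem_preimage, hS]; rfl
  rwa [hS] at ha

lemma exists_eq_measurable_comp {Z : Type*} [Nonempty Z] [MeasurableSpace Z]
    [StandardBorelSpace Z] (hf : ExactlyMeasurable f) {g : X → Z} (hg : Measurable g) :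
    ∃ h : Y → Z, Measurable h ∧ g = h ∘ f := by
  rw [ExactlyMeasurable] at hf
  subst hf
  exact hg.exists_eq_measurable_comp

end ExactlyMeasurable

theorem stmt8_general {X Y : Type*} [MeasurableSpace X] [MeasurableSpace Y]
    [MeasurableSingletonClass Y]
    (hX : IsTypeA X) (hY : IsTypeA Y)
    (f : X → Y) (hf : Measurable f) (hsurj : Function.Surjective f) :
    ∃ g : Y → X, (∀ y, f (g y) = y) ∧
      ∀ E' : Set X, MeasurableSet E' →
        ∀ ν : Measure Y, IsProbabilityMeasure ν →
          ∃ Fm Fp : Set Y, MeasurableSet Fm ∧ MeasurableSet Fp ∧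
            Fm ⊆ g ⁻¹' E' ∧ g ⁻¹' E' ⊆ Fp ∧ ν (Fp \ Fm) = 0 := by
  obtain ⟨-, ψ, hψ, hψA⟩ := hX
  obtain ⟨-, θ, hθ, -⟩ := hY
  obtain ⟨h, hh, hθf⟩ := hψ.exists_eq_measurable_comp (hθ.measurable.comp hf)
  -- the graph of `f`, read through the embeddings `θ` and `ψ`
  set G := (fun q => (h q, q)) '' range ψ
  have hθG : ∀ y, θ y ∈ Prod.fst '' G := fun y => by
    obtain ⟨x, rfl⟩ := hsurj y
    exact ⟨_, ⟨_, ⟨x, rfl⟩, rfl⟩, (congrFun hθf x).symm⟩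
  have hG : AnalyticSet G := hψA.image_of_measurable (hh.prodMk measurable_id)
  obtain ⟨s, hsG, hs⟩ := hG.exists_nullMeasurable_section hθ.measurable hθG
  have hlift : ∀ y, ∃ x, ψ x = s y ∧ f x = y := fun y => by
    obtain ⟨_, ⟨x, rfl⟩, hxy⟩ := hsG y
    simp only [Prod.mk.injEq] at hxy
    exact ⟨x, hxy.2, hθ.injective ((congrFun hθf x).trans hxy.1)⟩
  choose g hgψ hgf using hlift
  refine ⟨g, hgf, fun E' hE' ν _ => ?_⟩
  obtain ⟨S, hS, rfl⟩ := hψ.exists_measurableSet_preimage_eq hE'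
  have hpre : g ⁻¹' (ψ ⁻¹' S) = s ⁻¹' S := by ext y; simp [hgψ]
  rw [hpre]
  exact (hs ν inferInstance hS).exists_measurableSet_subset_superset

/-- (Yankov–von Neumann selection) Let `f : (X,E) → (Y,F)` be a surjective measurable map
between separable type A spaces.  Then there is a selector `g : Y → X` for `f` which is
universally measurable: for every `E' ∈ E` and every probability measure `ν` on `(Y,F)`
there are `F⁻, F⁺ ∈ F` with `F⁻ ⊆ g⁻¹(E') ⊆ F⁺` and `ν(F⁺ \ F⁻) = 0`. -/
theorem stmt8 {X Y : Type*} [MeasurableSpace X] [MeasurableSpace Y]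
    [MeasurableSingletonClass X] [MeasurableSingletonClass Y]
    (hX : IsTypeA X) (hY : IsTypeA Y)
    (f : X → Y) (hf : Measurable f) (hsurj : Function.Surjective f) :
    ∃ g : Y → X, (∀ y, f (g y) = y) ∧
      ∀ E' : Set X, MeasurableSet E' →
        ∀ ν : Measure Y, IsProbabilityMeasure ν →
          ∃ Fm Fp : Set Y, MeasurableSet Fm ∧ MeasurableSet Fp ∧
            Fm ⊆ g ⁻¹' E' ∧ g ⁻¹' E' ⊆ Fp ∧ ν (Fp \ Fm) = 0 :=
  stmt8_general hX hY f hf hsurj
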